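/- Let p be a real number with 0 < p < 1 and p ≠ 1/2, q = 1 - p, λ = 1 + 2/(pq), and let Φ : ℂ → ℂ satisfy Φ(λz) = (1/(pq))·Φ(z)·(Φ(z)²/4 + (3/2)Φ(z) + 2 + pq) for all z ∈ ℂ. Let s ∈ ℂ be such that the family μ ↦ μ^{-s} is summable over the set {μ ∈ ℝ : μ > 0, Φ(-μ) = -4}. Then ∑_{μ > 0, Φ(-μ) = -2+2p} μ^{-s} + ∑_{μ > 0, Φ(-μ) = -2+2q} μ^{-s} = (λ^s - 1) · ∑_{μ > 0, Φ(-μ) = -4} μ^{-s}. -/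

import Mathlib

/-!
Since `Φ(λz) = R_p(Φ z)` and `R_p(u) + 4 = (u + 4)(u + 2 - 2p)(u + 2 - 2q)/(4pq)`, the map
`μ ↦ λμ` is a bijection from the disjoint union of the level sets `{μ > 0 : Φ(-μ) = w}`,
`w ∈ {-4, -2+2p, -2+2q}` (distinct because `p, q > 0` and `p ≠ q`), onto the level set of `-4`.
As `(λμ)^{-s} = λ^{-s} μ^{-s}`, summing over both sides gives
`ζ_{Φ,-4} + ζ_{Φ,-2+2p} + ζ_{Φ,-2+2q} = λ^s ζ_{Φ,-4}`.
-/

open Complex Set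

theorem Summable.subtype_of_subset {β α : Type*} [NormedAddCommGroup α] [CompleteSpace α]
    {f : β → α} {s t : Set β} (h : s ⊆ t) (hf : Summable fun x : t => f x) :
    Summable fun x : s => f x :=
  hf.comp_injective (inclusion_injective h)

theorem Summable.tsum_union_disjoint_of_union {β α : Type*} [NormedAddCommGroup α]
    [CompleteSpace α] {f : β → α} {s t : Set β} (hd : Disjoint s t)
    (h : Summable fun x : ↥(s ∪ t) => f x) :
    ∑' x : ↥(s ∪ t), f x = ∑' x : s, f x + ∑' x : t, f x :=
  Summable.tsum_union_disjoint hd (h.subtype_of_subset subset_union_left)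
    (h.subtype_of_subset subset_union_right)

section Scaling

variable {c : ℝ} {S : Set ℝ} (s : ℂ)

theorem ofReal_cpow_neg_eq_cpow_mul_ofReal_mul (hc : 0 < c) {μ : ℝ} (hμ : 0 ≤ μ) :
    (μ : ℂ) ^ (-s) = (c : ℂ) ^ s * ((c * μ : ℝ) : ℂ) ^ (-s) := by
  rw [ofReal_mul, mul_cpow_ofReal_nonneg hc.le hμ, ← mul_assoc,
    ← cpow_add _ _ (ofReal_ne_zero.2 hc.ne'), add_neg_cancel, cpow_zero, one_mul]

noncomputable def preimageMulEquiv (hc : c ≠ 0) (S : Set ℝ) :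
    ((c * ·) ⁻¹' S : Set ℝ) ≃ S :=
  (Equiv.mulLeft₀ c hc).subtypeEquiv fun _ => Iff.rfl

theorem cpow_neg_preimage_mul_eq (hc : 0 < c) (hS : S ⊆ Ioi 0) :
    (fun μ : ((c * ·) ⁻¹' S : Set ℝ) => ((μ : ℝ) : ℂ) ^ (-s)) =
      fun μ => (c : ℂ) ^ s * ((preimageMulEquiv hc.ne' S μ : ℝ) : ℂ) ^ (-s) := by
  ext ⟨μ, hμ⟩
  have hcμ : 0 < c * μ := hS hμ
  exact ofReal_cpow_neg_eq_cpow_mul_ofReal_mul s hc (pos_of_mul_pos_right hcμ hc.le).le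

theorem summable_cpow_neg_preimage_mul_iff (hc : 0 < c) (hS : S ⊆ Ioi 0) :
    Summable (fun μ : ((c * ·) ⁻¹' S : Set ℝ) => ((μ : ℝ) : ℂ) ^ (-s)) ↔
      Summable (fun μ : S => ((μ : ℝ) : ℂ) ^ (-s)) := by
  rw [cpow_neg_preimage_mul_eq s hc hS,
    summable_mul_left_iff (cpow_ne_zero_iff.2 (.inl (ofReal_ne_zero.2 hc.ne')))]
  exact (preimageMulEquiv hc.ne' S).summable_iff (f := fun μ : S => ((μ : ℝ) : ℂ) ^ (-s))

theorem tsum_cpow_neg_preimage_mul (hc : 0 < c) (hS : S ⊆ Ioi 0) :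
    ∑' μ : ((c * ·) ⁻¹' S : Set ℝ), ((μ : ℝ) : ℂ) ^ (-s) =
      (c : ℂ) ^ s * ∑' μ : S, ((μ : ℝ) : ℂ) ^ (-s) := by
  rw [cpow_neg_preimage_mul_eq s hc hS, tsum_mul_left,
    (preimageMulEquiv hc.ne' S).tsum_eq (fun μ : S => ((μ : ℝ) : ℂ) ^ (-s))]

end Scaling

/-- The spectral decimation function `R_p` of the pq-model. -/
noncomputable def pqDecimation (p q z : ℂ) : ℂ :=
  (1 / (p * q)) * z * (z ^ 2 / 4 + (3 / 2) * z + 2 + p * q)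

theorem pqDecimation_add_four {p q : ℂ} (hpq : p + q = 1) (h : p * q ≠ 0) (u : ℂ) :
    pqDecimation p q u + 4 =
      (u + 4) * (u - (-2 + 2 * p)) * (u - (-2 + 2 * q)) / (4 * (p * q)) := by
  obtain ⟨hp, hq⟩ := mul_ne_zero_iff.1 h
  obtain rfl : q = 1 - p := by rw [← hpq]; ring
  unfold pqDecimation
  field_simp
  ring

theorem pqDecimation_eq_neg_four_iff {p q : ℂ} (hpq : p + q = 1) (h : p * q ≠ 0) (u : ℂ) :
    pqDecimation p q u = -4 ↔ u = -4 ∨ u = -2 + 2 * p ∨ u = -2 + 2 * q := by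
  rw [← add_eq_zero_iff_eq_neg, pqDecimation_add_four hpq h, div_eq_zero_iff,
    or_iff_left (mul_ne_zero (by norm_num) h), mul_eq_zero, mul_eq_zero, sub_eq_zero, sub_eq_zero,
    add_eq_zero_iff_eq_neg, or_assoc]

theorem pqDecimation_preimage_neg_four {p q : ℂ} (hpq : p + q = 1) (h : p * q ≠ 0) :
    pqDecimation p q ⁻¹' {-4} = {-4} ∪ ({-2 + 2 * p} ∪ {-2 + 2 * q}) := by
  ext u
  exact pqDecimation_eq_neg_four_iff hpq h u

theorem disjoint_neg_four_pqRoots {p q : ℝ} (hp : 0 < p) (hq : 0 < q) :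
    Disjoint ({-4} : Set ℂ) ({-2 + 2 * (p : ℂ)} ∪ {-2 + 2 * (q : ℂ)}) := by
  refine disjoint_singleton_left.2 ?_
  rintro (h | h)
  · have h' : (-4 : ℝ) = -2 + 2 * p := by exact_mod_cast mem_singleton_iff.1 h
    linarith
  · have h' : (-4 : ℝ) = -2 + 2 * q := by exact_mod_cast mem_singleton_iff.1 h
    linarith

theorem disjoint_pqRoots {p q : ℝ} (hpq : p ≠ q) :
    Disjoint ({-2 + 2 * (p : ℂ)} : Set ℂ) {-2 + 2 * (q : ℂ)} :=
  disjoint_singleton.2 fun h => hpq <| by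
    have h' : -2 + 2 * p = -2 + 2 * q := by exact_mod_cast h
    linarith

/-- The positive `μ` with `Φ(-μ) ∈ W`; for `W = {w}` these index the terms of `ζ_{Φ,w}`. -/
def posSpectrum (Φ : ℂ → ℂ) (W : Set ℂ) : Set ℝ :=
  Ioi 0 ∩ (fun μ : ℝ => Φ (-(μ : ℂ))) ⁻¹' W

section posSpectrum

variable (Φ : ℂ → ℂ)

theorem posSpectrum_subset_Ioi (W : Set ℂ) : posSpectrum Φ W ⊆ Ioi 0 := inter_subset_left

theorem posSpectrum_mono {W₁ W₂ : Set ℂ} (h : W₁ ⊆ W₂) :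
    posSpectrum Φ W₁ ⊆ posSpectrum Φ W₂ :=
  inter_subset_inter_right _ (preimage_mono h)

theorem posSpectrum_union (W₁ W₂ : Set ℂ) :
    posSpectrum Φ (W₁ ∪ W₂) = posSpectrum Φ W₁ ∪ posSpectrum Φ W₂ := by
  rw [posSpectrum, preimage_union, inter_union_distrib_left]; rfl

theorem disjoint_posSpectrum {W₁ W₂ : Set ℂ} (h : Disjoint W₁ W₂) :
    Disjoint (posSpectrum Φ W₁) (posSpectrum Φ W₂) :=
  (h.preimage _).mono inter_subset_right inter_subset_right

theorem preimage_mul_posSpectrum {c : ℝ} (hc : 0 < c) {R : ℂ → ℂ}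
    (hΦ : ∀ z, Φ (c * z) = R (Φ z)) (W : Set ℂ) :
    (c * ·) ⁻¹' posSpectrum Φ W = posSpectrum Φ (R ⁻¹' W) := by
  ext μ
  simp only [posSpectrum, mem_preimage, mem_inter_iff, mem_Ioi, mul_pos_iff_of_pos_left hc,
    ofReal_mul, neg_mul_eq_mul_neg, hΦ]

theorem tsum_cpow_neg_posSpectrum_union (s : ℂ) {W₁ W₂ : Set ℂ} (h : Disjoint W₁ W₂)
    (hsum : Summable fun μ : posSpectrum Φ (W₁ ∪ W₂) => ((μ : ℝ) : ℂ) ^ (-s)) :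
    ∑' μ : posSpectrum Φ (W₁ ∪ W₂), ((μ : ℝ) : ℂ) ^ (-s) =
      ∑' μ : posSpectrum Φ W₁, ((μ : ℝ) : ℂ) ^ (-s) +
        ∑' μ : posSpectrum Φ W₂, ((μ : ℝ) : ℂ) ^ (-s) := by
  rw [posSpectrum_union] at hsum ⊢
  exact Summable.tsum_union_disjoint_of_union (f := fun μ : ℝ => (μ : ℂ) ^ (-s))
    (disjoint_posSpectrum Φ h) hsum

end posSpectrum

/-- For the pq-model with `p ≠ 1/2` and `λ = 1 + 2/(pq)`:
`ζ_{Φ,-2+2p}(s) + ζ_{Φ,-2+2q}(s) = (λ^s - 1)·ζ_{Φ,-4}(s)`, where `ζ_{Φ,w}(s)` is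
the unconditional sum of `μ^{-s}` over `{μ > 0 : Φ(-μ) = w}`, assuming summability
of the family for `w = -4`. -/
theorem pq_zeta_cancellation_neg_four (p : ℝ) (hp0 : 0 < p) (hp1 : p < 1)
    (hp : p ≠ 1 / 2) (q : ℝ) (hq : q = 1 - p)
    (lam : ℝ) (hlam : lam = 1 + 2 / (p * q)) (Φ : ℂ → ℂ)
    (hΦ : ∀ z : ℂ, Φ ((lam : ℂ) * z) =
      (1 / ((p : ℂ) * q)) * Φ z * ((Φ z) ^ 2 / 4 + (3 / 2) * Φ z + 2 + (p : ℂ) * q))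
    (s : ℂ)
    (hsum : Summable fun μ : {μ : ℝ // 0 < μ ∧ Φ (-(μ : ℂ)) = -4} =>
      ((μ : ℝ) : ℂ) ^ (-s)) :
    (∑' μ : {μ : ℝ // 0 < μ ∧ Φ (-(μ : ℂ)) = -2 + 2 * p}, ((μ : ℝ) : ℂ) ^ (-s))
      + (∑' μ : {μ : ℝ // 0 < μ ∧ Φ (-(μ : ℂ)) = -2 + 2 * q}, ((μ : ℝ) : ℂ) ^ (-s))
      = (((lam : ℂ)) ^ s - 1) *
        ∑' μ : {μ : ℝ // 0 < μ ∧ Φ (-(μ : ℂ)) = -4}, ((μ : ℝ) : ℂ) ^ (-s) := by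
  have hq0 : 0 < q := by linarith
  have hlam0 : 0 < lam := by rw [hlam]; positivity
  have hpq : (p : ℂ) + q = 1 := by rw [hq]; push_cast; ring
  have hpq0 : (p : ℂ) * q ≠ 0 := by exact_mod_cast (mul_pos hp0 hq0).ne'
  have hpre : (lam * ·) ⁻¹' posSpectrum Φ {-4} =
      posSpectrum Φ ({-4} ∪ ({-2 + 2 * (p : ℂ)} ∪ {-2 + 2 * (q : ℂ)})) := by
    rw [preimage_mul_posSpectrum Φ hlam0 (R := pqDecimation p q) hΦ,
      pqDecimation_preimage_neg_four hpq hpq0]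
  have hS := posSpectrum_subset_Ioi Φ {-4}
  have hsum' := (summable_cpow_neg_preimage_mul_iff s hlam0 hS).2 hsum
  have key := tsum_cpow_neg_preimage_mul s hlam0 hS
  rw [hpre] at hsum' key
  rw [tsum_cpow_neg_posSpectrum_union Φ s (disjoint_neg_four_pqRoots hp0 hq0) hsum',
    tsum_cpow_neg_posSpectrum_union Φ s (disjoint_pqRoots (by contrapose! hp; linarith))
      (Summable.subtype_of_subset (f := fun μ : ℝ => (μ : ℂ) ^ (-s))
        (posSpectrum_mono Φ subset_union_right) hsum')] at key
  show ∑' μ : posSpectrum Φ {-2 + 2 * (p : ℂ)}, ((μ : ℝ) : ℂ) ^ (-s) +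
      ∑' μ : posSpectrum Φ {-2 + 2 * (q : ℂ)}, ((μ : ℝ) : ℂ) ^ (-s) =
    ((lam : ℂ) ^ s - 1) * ∑' μ : posSpectrum Φ {-4}, ((μ : ℝ) : ℂ) ^ (-s)
  linear_combination key
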